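/- arXiv:2404.03401 — 7 statements merged into one kernel-verified Lean document; each statement's English description precedes it below -/
import Mathlib

section
/- The minimizer over σ² > 0 of ‖R̂⁻¹ − (σ² a aᴴ + I)⁻¹‖_F², with a unit vector a, is σ² = 1/(aᴴ R̂⁻¹ a) − 1, provided aᴴ R̂⁻¹ a ∈ (0,1). -/
open Matrix Complex ComplexOrder

noncomputable def frobSq {M : ℕ} (A : Matrix (Fin M) (Fin M) ℂ) : ℝ :=
  ∑ i, ∑ j, Complex.normSq (A i j)

/-!
For a unit vector `a`, `P = a aᴴ` is idempotent, so `(σ² P + I)⁻¹ = I - c P` with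
`c = σ² / (σ² + 1)`. Expanding the Frobenius norm, the objective becomes the quadratic
`‖R̂⁻¹ - I‖² + 2 c (q - 1) + c²` in `c`, where `q = aᴴ R̂⁻¹ a`; it is least at `c = 1 - q`,
which is the value of `c` at `σ² = 1/q - 1`.
-/

lemma Matrix.isIdempotentElem_vecMulVec {n α : Type*} [Fintype n] [Semiring α] {u v : n → α}
    (h : v ⬝ᵥ u = 1) : IsIdempotentElem (vecMulVec u v) := by
  rw [IsIdempotentElem, vecMulVec_mul_vecMulVec, h, one_smul]

lemma Matrix.inv_smul_add_one_of_isIdempotentElem {n K : Type*} [Fintype n] [DecidableEq n]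
    [Field K] {P : Matrix n n K} (hP : IsIdempotentElem P) {s : K} (hs : s + 1 ≠ 0) :
    (s • P + 1)⁻¹ = 1 - (s / (s + 1)) • P := by
  apply inv_eq_right_inv
  have hcoeff : s - s / (s + 1) - s * (s / (s + 1)) = 0 := by
    field_simp
    ring
  calc (s • P + 1) * (1 - (s / (s + 1)) • P)
      = 1 + (s - s / (s + 1) - s * (s / (s + 1))) • P := by
        simp only [add_mul, mul_sub, smul_mul_smul, hP.eq, mul_one, one_mul, sub_smul, mul_smul]
        abel
    _ = 1 := by rw [hcoeff, zero_smul, add_zero]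

section frobSq

variable {M : ℕ}

lemma frobSq_add (A B : Matrix (Fin M) (Fin M) ℂ) :
    frobSq (A + B) = frobSq A + 2 * ∑ i, ∑ j, (A i j * star (B i j)).re + frobSq B := by
  simp only [frobSq, Matrix.add_apply, normSq_add, Finset.sum_add_distrib, Finset.mul_sum,
    star_def]
  ring

lemma frobSq_smul (c : ℂ) (A : Matrix (Fin M) (Fin M) ℂ) :
    frobSq (c • A) = normSq c * frobSq A := by
  simp only [frobSq, Matrix.smul_apply, smul_eq_mul, normSq_mul, Finset.mul_sum]

lemma frobSq_vecMulVec_star {a : Fin M → ℂ} (ha : star a ⬝ᵥ a = 1) :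
    frobSq (vecMulVec a (star a)) = 1 := by
  have hnorm : ∑ i, normSq (a i) = 1 := by
    exact_mod_cast (show ∑ i, (normSq (a i) : ℂ) = 1 by
      simpa [dotProduct, normSq_eq_conj_mul_self] using ha)
  simp only [frobSq, vecMulVec_apply, Pi.star_apply, normSq_mul, star_def, normSq_conj,
    ← Finset.mul_sum, ← Finset.sum_mul, hnorm, one_mul]

lemma sum_mul_star_vecMulVec (B : Matrix (Fin M) (Fin M) ℂ) (u v : Fin M → ℂ) :
    ∑ i, ∑ j, B i j * star (vecMulVec u v i j) = star u ⬝ᵥ B *ᵥ star v := by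
  simp only [vecMulVec_apply, dotProduct, mulVec, Pi.star_apply, star_mul', Finset.mul_sum]
  refine Finset.sum_congr rfl fun i _ => Finset.sum_congr rfl fun j _ => ?_
  ring

lemma frobSq_add_smul_vecMulVec_star (B : Matrix (Fin M) (Fin M) ℂ) {a : Fin M → ℂ}
    (ha : star a ⬝ᵥ a = 1) (c : ℝ) :
    frobSq (B + (c : ℂ) • vecMulVec a (star a)) =
      frobSq B + 2 * c * (star a ⬝ᵥ B *ᵥ a).re + c ^ 2 := by
  have hcross : ∑ i, ∑ j, (B i j * star (((c : ℂ) • vecMulVec a (star a)) i j)).re =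
      c * (star a ⬝ᵥ B *ᵥ a).re := by
    have h := congrArg (fun z : ℂ => (c * z).re) (sum_mul_star_vecMulVec B a (star a))
    simp only [star_star, re_ofReal_mul, Finset.mul_sum, re_sum] at h
    rw [← h]
    refine Finset.sum_congr rfl fun i _ => Finset.sum_congr rfl fun j _ => ?_
    simp only [Matrix.smul_apply, smul_eq_mul, star_mul', star_def, conj_ofReal]
    rw [mul_left_comm, re_ofReal_mul]
  rw [frobSq_add, frobSq_smul, normSq_ofReal, frobSq_vecMulVec_star ha, hcross]
  ring

lemma frobSq_sub_inv_smul_vecMulVec_star_add_one (R : Matrix (Fin M) (Fin M) ℂ)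
    {a : Fin M → ℂ} (ha : star a ⬝ᵥ a = 1) {s : ℝ} (hs : s + 1 ≠ 0) :
    frobSq (R - ((s : ℂ) • vecMulVec a (star a) + 1)⁻¹) =
      frobSq (R - 1) + 2 * (s / (s + 1)) * ((star a ⬝ᵥ R *ᵥ a).re - 1) + (s / (s + 1)) ^ 2 := by
  have hsC : (s : ℂ) + 1 ≠ 0 := by exact_mod_cast hs
  rw [inv_smul_add_one_of_isIdempotentElem (isIdempotentElem_vecMulVec ha) hsC,
    show R - (1 - ((s : ℂ) / (s + 1)) • vecMulVec a (star a)) =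
      (R - 1) + ((s / (s + 1) : ℝ) : ℂ) • vecMulVec a (star a) by push_cast; abel,
    frobSq_add_smul_vecMulVec_star _ ha, sub_mulVec, one_mulVec, dotProduct_sub, ha]
  simp

end frobSq

theorem stmt_2_general {M : ℕ} (Rh : Matrix (Fin M) (Fin M) ℂ)
    (a : Fin M → ℂ) (ha : star a ⬝ᵥ a = 1)
    (q : ℝ) (hq : q = (star a ⬝ᵥ Rh⁻¹ *ᵥ a).re) (hq0 : 0 < q)
    (f : ℝ → ℝ)
    (hf : ∀ s : ℝ, f s =
      frobSq (Rh⁻¹ - ((s : ℂ) • Matrix.vecMulVec a (star a) + 1)⁻¹)) :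
    ∀ t : ℝ, 0 < t → f (1 / q - 1) ≤ f t := by
  intro t ht
  have hf_quadratic : ∀ s : ℝ, s + 1 ≠ 0 →
      f s = frobSq (Rh⁻¹ - 1) + 2 * (s / (s + 1)) * (q - 1) + (s / (s + 1)) ^ 2 := fun s hs => by
    rw [hf, frobSq_sub_inv_smul_vecMulVec_star_add_one _ ha hs, hq]
  have hopt : (1 / q - 1) / (1 / q - 1 + 1) = 1 - q := by
    rw [sub_add_cancel]
    field_simp
  rw [hf_quadratic t (by positivity), hf_quadratic _ (by rw [sub_add_cancel]; positivity), hopt]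
  nlinarith [sq_nonneg (t / (t + 1) - (1 - q))]

/-- The minimizer over σ² > 0 of ‖R̂⁻¹ − (σ² a aᴴ + I)⁻¹‖_F², with `a` a unit vector,
is σ² = 1/(aᴴ R̂⁻¹ a) − 1, provided aᴴ R̂⁻¹ a ∈ (0,1). -/
theorem stmt_2 {M : ℕ} (Rh : Matrix (Fin M) (Fin M) ℂ) (hRh : Rh.PosDef)
    (a : Fin M → ℂ) (ha : star a ⬝ᵥ a = 1)
    (q : ℝ) (hq : q = (star a ⬝ᵥ Rh⁻¹ *ᵥ a).re) (hq0 : 0 < q) (hq1 : q < 1)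
    (f : ℝ → ℝ)
    (hf : ∀ s : ℝ, f s =
      frobSq (Rh⁻¹ - ((s : ℂ) • Matrix.vecMulVec a (star a) + 1)⁻¹)) :
    ∀ t : ℝ, 0 < t → f (1 / q - 1) ≤ f t :=
  stmt_2_general Rh a ha q hq hq0 f hf
end

section
/- For a unit vector a and σ² > −1, the matrix logarithm of R = σ² a aᴴ + I equals log(σ²+1) · a aᴴ. -/
open Matrix Complex ComplexOrder

section Aux
open scoped Matrix.Norms.L2Operator

set_option maxHeartbeats 2000000 in
lemma exp_smul_idem {n : Type*} [Fintype n] [DecidableEq n]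
    (c : ℂ) (P : Matrix n n ℂ) (hP : P * P = P) :
    NormedSpace.exp (c • P) = 1 + (Complex.exp c - 1) • P := by
  have hpow : ∀ k : ℕ, (c • P) ^ (k + 1) = c ^ (k + 1) • P := by
    intro k
    induction k with
    | zero => simp
    | succ k ih =>
      rw [pow_succ, ih, smul_mul_smul_comm, hP, ← pow_succ]
  have hsum : Summable fun k : ℕ => ((Nat.factorial k : ℂ))⁻¹ • (c • P) ^ k :=
    NormedSpace.expSeries_summable' (𝕂 := ℂ) (c • P)
  rw [NormedSpace.exp_eq_tsum ℂ]
  beta_reduce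
  rw [Summable.tsum_eq_zero_add hsum]
  have h1 : ((Nat.factorial 0 : ℂ))⁻¹ • (c • P) ^ 0 = 1 := by simp
  rw [h1]
  congr 1
  have h2 : ∀ k : ℕ, ((Nat.factorial (k+1) : ℂ))⁻¹ • (c • P) ^ (k+1)
      = (((Nat.factorial (k+1) : ℂ))⁻¹ * c ^ (k+1)) • P := by
    intro k; rw [hpow, smul_smul]
  simp_rw [h2]
  have hsumc : Summable fun k : ℕ => ((Nat.factorial k : ℂ))⁻¹ * c ^ k := by
    have := (NormedSpace.expSeries_summable' (𝕂 := ℂ) (c : ℂ))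
    simp_rw [smul_eq_mul] at this; exact this
  have hs : Summable fun k : ℕ => ((Nat.factorial (k+1) : ℂ))⁻¹ * c ^ (k+1) :=
    (summable_nat_add_iff 1).mpr hsumc
  rw [Summable.tsum_smul_const hs]
  congr 1
  have he : Complex.exp c = ∑' k : ℕ, ((Nat.factorial k : ℂ))⁻¹ * c ^ k := by
    rw [Complex.exp_eq_exp_ℂ, NormedSpace.exp_eq_tsum ℂ]
    simp_rw [smul_eq_mul]
  rw [he, Summable.tsum_eq_zero_add hsumc]
  simp

lemma herm_log_unique {m : ℕ} (X L : Matrix (Fin m) (Fin m) ℂ)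
    (hX : X.IsHermitian) (hL : L.IsHermitian)
    (h : NormedSpace.exp L = NormedSpace.exp X) : L = X := by
  have h1 : IsSelfAdjoint L := hL
  have h2 : IsSelfAdjoint X := hX
  have e1 : NormedSpace.exp L = NormedSpace.exp L :=
    rfl
  have e2 : NormedSpace.exp X = NormedSpace.exp X :=
    rfl
  calc L = CFC.log (NormedSpace.exp L) := (CFC.log_exp L h1).symm
    _ = CFC.log (NormedSpace.exp X) := by rw [e1, e2, h]
    _ = X := CFC.log_exp X h2

end Aux

/-- For a unit vector `a` and σ² > −1, the (principal) matrix logarithm of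
R = σ² a aᴴ + I equals log(σ²+1) · a aᴴ: any Hermitian matrix L with exp L = R
equals log(σ²+1) · a aᴴ (which is itself Hermitian and satisfies exp of it = R). -/
theorem stmt_3 {M : ℕ} (a : Fin M → ℂ) (ha : star a ⬝ᵥ a = 1)
    (s : ℝ) (hs : -1 < s) :
    NormedSpace.exp (((Real.log (s + 1) : ℝ) : ℂ) • Matrix.vecMulVec a (star a)) =
        (s : ℂ) • Matrix.vecMulVec a (star a) + 1 ∧
      (((Real.log (s + 1) : ℝ) : ℂ) • Matrix.vecMulVec a (star a)).IsHermitian ∧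
      ∀ L : Matrix (Fin M) (Fin M) ℂ, L.IsHermitian →
        NormedSpace.exp L = (s : ℂ) • Matrix.vecMulVec a (star a) + 1 →
        L = ((Real.log (s + 1) : ℝ) : ℂ) • Matrix.vecMulVec a (star a) := by
  set P : Matrix (Fin M) (Fin M) ℂ := Matrix.vecMulVec a (star a) with hPdef
  have hs1 : (0:ℝ) < s + 1 := by linarith
  have hP : P * P = P := by
    ext i j
    simp only [hPdef, Matrix.mul_apply, Matrix.vecMulVec_apply, Pi.star_apply]
    have h : ∀ k, (a i * star (a k)) * (a k * star (a j))
        = (a i * star (a j)) * (star (a k) * a k) := fun k => by ring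
    rw [Finset.sum_congr rfl (fun k _ => h k), ← Finset.mul_sum]
    have h1 : ∑ k, star (a k) * a k = 1 := by
      simpa [dotProduct] using ha
    rw [h1, mul_one]
  have hexpc : Complex.exp ((Real.log (s + 1) : ℝ) : ℂ) = ((s : ℂ) + 1) := by
    rw [← Complex.ofReal_exp, Real.exp_log hs1]
    push_cast; ring
  have key : NormedSpace.exp (((Real.log (s + 1) : ℝ) : ℂ) • P) = (s : ℂ) • P + 1 := by
    rw [exp_smul_idem _ P hP, hexpc]
    have h3 : ((s : ℂ) + 1) - 1 = (s : ℂ) := by ring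
    rw [h3, add_comm]
  have herm : (((Real.log (s + 1) : ℝ) : ℂ) • P).IsHermitian := by
    unfold Matrix.IsHermitian
    rw [Matrix.conjTranspose_smul]
    congr 1
    · exact Complex.conj_ofReal _
    · ext i j
      simp [hPdef, Matrix.conjTranspose_apply, Matrix.vecMulVec_apply, mul_comm]
  refine ⟨key, herm, ?_⟩
  intro L hL hexp
  exact herm_log_unique _ L herm hL (by rw [hexp, key])
end

section
/- The minimizer over σ² > 0 of the Log-Euclidean distance ‖log(R̂) − log(σ² a aᴴ + I)‖_F², with a a unit vector, is σ² = exp(aᴴ log(R̂) a) − 1, provided aᴴ log(R̂) a > 0. -/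
open Matrix Complex ComplexOrder

lemma frobSq_expand {M : ℕ} (L : Matrix (Fin M) (Fin M) ℂ)
    (a : Fin M → ℂ) (ha : star a ⬝ᵥ a = 1) (c : ℝ) :
    frobSq (L - (c : ℂ) • Matrix.vecMulVec a (star a)) =
      frobSq L - 2 * c * (star a ⬝ᵥ L *ᵥ a).re + c ^ 2 := by
  have hsum1 : (∑ i, Complex.normSq (a i)) = 1 := by
    have h := congrArg Complex.re ha
    simpa [dotProduct, Complex.mul_conj', Complex.re_sum, Complex.normSq_apply] using h
  have hq : (star a ⬝ᵥ L *ᵥ a).re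
      = ∑ i, ∑ j, ((L i j) * (starRingEnd ℂ) (a i) * a j).re := by
    simp [dotProduct, mulVec, Complex.re_sum, Finset.mul_sum, mul_comm, mul_left_comm,
      mul_assoc]
  unfold frobSq
  simp only [Matrix.sub_apply, Matrix.smul_apply, Matrix.vecMulVec_apply, Pi.star_apply,
    Complex.normSq_sub]
  simp only [Finset.sum_sub_distrib, Finset.sum_add_distrib]
  have h2 : ∑ i, ∑ j, 2 * (L i j * (starRingEnd ℂ) ((c : ℂ) • (a i * star (a j)))).re
      = 2 * c * (star a ⬝ᵥ L *ᵥ a).re := by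
    rw [hq, Finset.mul_sum]
    congr 1; ext i
    rw [Finset.mul_sum]
    congr 1; ext j
    have : (L i j * (starRingEnd ℂ) ((c : ℂ) • (a i * star (a j)))).re
        = c * (L i j * (starRingEnd ℂ) (a i) * a j).re := by
      have h1 : (starRingEnd ℂ) ((c : ℂ) * (a i * star (a j)))
          = (c : ℂ) * ((starRingEnd ℂ) (a i) * a j) := by
        simp [map_mul (starRingEnd ℂ)]
      rw [smul_eq_mul, h1,
        show L i j * ((c : ℂ) * ((starRingEnd ℂ) (a i) * a j))
          = (c : ℂ) * (L i j * (starRingEnd ℂ) (a i) * a j) by ring,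
        Complex.re_ofReal_mul]
    rw [this]; ring
  have h3 : ∑ i, ∑ j, Complex.normSq ((c : ℂ) • (a i * star (a j))) = c ^ 2 := by
    have : ∀ i j, Complex.normSq ((c : ℂ) • (a i * star (a j)))
        = c ^ 2 * (Complex.normSq (a i) * Complex.normSq (a j)) := by
      intro i j
      rw [smul_eq_mul, Complex.normSq_mul, Complex.normSq_mul, Complex.normSq_ofReal,
        show Complex.normSq (star (a j)) = Complex.normSq (a j) from Complex.normSq_conj _]
      ring
    simp only [this, ← Finset.mul_sum, ← Finset.sum_mul, hsum1]
    ring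
  rw [h2, h3]
  ring

/-- The minimizer over σ² > 0 of the Log-Euclidean distance
‖log(R̂) − log(σ² a aᴴ + I)‖_F², with `a` a unit vector, is
σ² = exp(aᴴ log(R̂) a) − 1, provided aᴴ log(R̂) a > 0.  Here log(R̂) is represented
by a Hermitian matrix `L` with exp L = R̂, and log(σ² a aᴴ + I) = log(σ²+1) a aᴴ. -/
theorem stmt_4 {M : ℕ} (Rh : Matrix (Fin M) (Fin M) ℂ) (hRh : Rh.PosDef)
    (L : Matrix (Fin M) (Fin M) ℂ) (hL : L.IsHermitian)
    (hexp : NormedSpace.exp L = Rh)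
    (a : Fin M → ℂ) (ha : star a ⬝ᵥ a = 1)
    (hpos : 0 < (star a ⬝ᵥ L *ᵥ a).re)
    (f : ℝ → ℝ)
    (hf : ∀ s : ℝ, f s =
      frobSq (L - ((Real.log (s + 1) : ℝ) : ℂ) • Matrix.vecMulVec a (star a))) :
    ∀ t : ℝ, 0 < t → f (Real.exp ((star a ⬝ᵥ L *ᵥ a).re) - 1) ≤ f t := by
  intro t ht
  set q := (star a ⬝ᵥ L *ᵥ a).re with hqdef
  rw [hf, hf, frobSq_expand L a ha, frobSq_expand L a ha]
  have hlog : Real.log (Real.exp q - 1 + 1) = q := by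
    rw [sub_add_cancel, Real.log_exp]
  rw [hlog]
  nlinarith [sq_nonneg (Real.log (t + 1) - q)]
end

section
/- If R̄ = σ₁² a₁ a₁ᴴ + I with unit vector a₁ and σ₁² > 0, then for any unit vector a, exp(aᴴ log(R̄) a) − 1 = (σ₁²+1)^{b} − 1 where b = |aᴴ a₁|². -/
open Matrix Complex ComplexOrder

private lemma vecMulVec_mul_self' {M : ℕ} (a₁ : Fin M → ℂ) (h : star a₁ ⬝ᵥ a₁ = 1) :
    vecMulVec a₁ (star a₁) * vecMulVec a₁ (star a₁) = vecMulVec a₁ (star a₁) := by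
  ext i j
  simp only [mul_apply, vecMulVec_apply]
  calc ∑ k, a₁ i * star a₁ k * (a₁ k * star a₁ j)
      = (star a₁ ⬝ᵥ a₁) * (a₁ i * star a₁ j) := by
        simp only [dotProduct, Finset.sum_mul, Pi.star_apply]
        exact Finset.sum_congr rfl fun k _ => by ring
    _ = a₁ i * star a₁ j := by rw [h, one_mul]

private lemma vecMulVec_mulVec' {M : ℕ} (a₁ x : Fin M → ℂ) :
    vecMulVec a₁ (star a₁) *ᵥ x = (star a₁ ⬝ᵥ x) • a₁ := by
  ext i
  simp only [mulVec, dotProduct, vecMulVec_apply, Pi.smul_apply, smul_eq_mul,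
    Finset.sum_mul, Pi.star_apply]
  exact Finset.sum_congr rfl fun k _ => by ring

private lemma herm_log_unique_s5 {M : ℕ} (s₁ : ℝ) (hs₁ : 0 < s₁) (P L : Matrix (Fin M) (Fin M) ℂ)
    (hPP : P * P = P) (hL : L.IsHermitian)
    (hexp : NormedSpace.exp L = (s₁ : ℂ) • P + 1) :
    L = (Real.log (s₁ + 1) : ℂ) • P := by
  set c := Real.log (s₁ + 1) with hc
  set U : Matrix (Fin M) (Fin M) ℂ := (hL.eigenvectorUnitary : Matrix (Fin M) (Fin M) ℂ)
    with hUdef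
  set lam := hL.eigenvalues with hlam
  have hU1 : U * star U = 1 := mem_unitaryGroup_iff.mp (hL.eigenvectorUnitary).2
  have hU1' : star U * U = 1 := mem_unitaryGroup_iff'.mp (hL.eigenvectorUnitary).2
  have hUinv : U⁻¹ = star U := inv_eq_left_inv hU1'
  have hUisUnit : IsUnit U := isUnit_iff_exists.mpr ⟨star U, hU1, hU1'⟩
  have hspec : L = U * diagonal (fun i => ((lam i : ℝ) : ℂ)) * star U := by
    have := hL.spectral_theorem
    convert this using 2
    rfl
  set ν : Fin M → ℂ := fun i => ((Real.exp (lam i) : ℝ) : ℂ) with hν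
  have hexpD : NormedSpace.exp L = U * diagonal ν * star U := by
    rw [hspec, ← hUinv, Matrix.exp_conj U _ hUisUnit, Matrix.exp_diagonal]
    have hfun : (NormedSpace.exp fun i => ((lam i : ℝ) : ℂ)) = ν := by
      rw [Pi.exp_def]
      funext i
      rw [hν]
      show NormedSpace.exp ((lam i : ℝ) : ℂ) = ((Real.exp (lam i) : ℝ) : ℂ)
      rw [Complex.ofReal_exp, Complex.exp_eq_exp_ℂ]
    rw [hfun]
  have key : U * diagonal ν * star U = (s₁ : ℂ) • P + 1 := by rw [← hexpD, hexp]
  have hq : ((s₁:ℂ) • P + 1 - 1) * ((s₁:ℂ) • P + 1 - ((s₁:ℂ) + 1) • 1) = 0 := by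
    have h1 : (s₁:ℂ) • P + 1 - 1 = (s₁:ℂ) • P := add_sub_cancel_right _ _
    have h2 : (s₁:ℂ) • P + 1 - ((s₁:ℂ) + 1) • 1 = (s₁:ℂ) • (P - 1) := by
      rw [smul_sub, add_smul, one_smul]; abel
    rw [h1, h2, smul_mul_assoc, mul_smul_comm, mul_sub, hPP, mul_one, sub_self,
      smul_zero, smul_zero]
  have e1 : U * diagonal ν * star U - 1 = U * (diagonal ν - 1) * star U := by
    rw [Matrix.mul_sub, Matrix.sub_mul, Matrix.mul_one, hU1]
  have e2 : U * diagonal ν * star U - ((s₁:ℂ) + 1) • 1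
      = U * (diagonal ν - ((s₁:ℂ) + 1) • 1) * star U := by
    rw [Matrix.mul_sub, Matrix.sub_mul, mul_smul_comm, smul_mul_assoc, Matrix.mul_one, hU1]
  have assoc_eq : (U * (diagonal ν - 1) * star U) * (U * (diagonal ν - ((s₁:ℂ) + 1) • 1) * star U)
      = U * ((diagonal ν - 1) * (diagonal ν - ((s₁:ℂ) + 1) • 1)) * star U := by
    simp only [Matrix.mul_assoc]
    rw [← Matrix.mul_assoc (star U) U, hU1', Matrix.one_mul]
  have hz : U * ((diagonal ν - 1) * (diagonal ν - ((s₁:ℂ) + 1) • 1)) * star U = 0 := by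
    rw [← assoc_eq, ← e1, ← e2, key, hq]
  have hz2 : (diagonal ν - 1) * (diagonal ν - ((s₁:ℂ) + 1) • 1) = 0 := by
    have h2 := congrArg (fun X => star U * X * U) hz
    simp only [Matrix.mul_zero, Matrix.zero_mul] at h2
    rw [← h2]
    simp only [← Matrix.mul_assoc]
    rw [hU1', Matrix.one_mul, Matrix.mul_assoc, hU1', Matrix.mul_one]
  have d1 : diagonal ν - 1 = diagonal (fun i => ν i - 1) := by
    ext i j; by_cases h : i = j <;> simp [h, diagonal_apply]
  have d2 : diagonal ν - ((s₁:ℂ) + 1) • 1 = diagonal (fun i => ν i - ((s₁:ℂ) + 1)) := by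
    ext i j; by_cases h : i = j <;> simp [h, diagonal_apply]
  have hdiagq : ∀ i, (ν i - 1) * (ν i - ((s₁:ℂ) + 1)) = 0 := by
    have h3 : diagonal (fun i => (ν i - 1) * (ν i - ((s₁:ℂ) + 1))) = (0 : Matrix _ _ ℂ) := by
      rw [← diagonal_mul_diagonal, ← d1, ← d2, hz2]
    intro i
    simpa using congrFun (congrFun h3 i) i
  have hlampt : ∀ i, lam i = (c / s₁) * (Real.exp (lam i) - 1) := by
    intro i
    have hec : Real.exp c = s₁ + 1 := Real.exp_log (by linarith)
    rcases mul_eq_zero.mp (hdiagq i) with h | h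
    · have h1 : ((Real.exp (lam i) : ℝ) : ℂ) = 1 := by
        simpa [hν, sub_eq_zero] using h
      have h2 : Real.exp (lam i) = 1 := by exact_mod_cast h1
      have h0 : lam i = 0 := Real.exp_injective (by rw [h2, Real.exp_zero])
      rw [h0]; simp
    · have h1 : ((Real.exp (lam i) : ℝ) : ℂ) = ((s₁ + 1 : ℝ) : ℂ) := by
        push_cast
        simpa [hν, sub_eq_zero] using h
      have h2 : Real.exp (lam i) = s₁ + 1 := by exact_mod_cast h1
      have h0 : lam i = c := Real.exp_injective (by rw [h2, hec])
      rw [h0, hec]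
      field_simp
      ring
  have hD : diagonal (fun i => ((lam i : ℝ) : ℂ)) = ((c / s₁ : ℝ) : ℂ) • (diagonal ν - 1) := by
    rw [d1]
    ext i j
    by_cases h : i = j
    · subst h
      simp only [diagonal_apply_eq, Matrix.smul_apply, smul_eq_mul]
      rw [hlampt i]
      simp only [hν]
      push_cast
      ring
    · simp [h, diagonal_apply]
  have : L = ((c / s₁ : ℝ) : ℂ) • ((s₁:ℂ) • P) := by
    rw [hspec, hD, mul_smul_comm, smul_mul_assoc, ← e1, key, add_sub_cancel_right]
  rw [this, smul_smul]
  congr 1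
  rw [← Complex.ofReal_mul]
  congr 1
  field_simp

/-- If R̄ = σ₁² a₁ a₁ᴴ + I with unit vector a₁ and σ₁² > 0, then for any unit vector a,
exp(aᴴ log(R̄) a) − 1 = (σ₁²+1)^b − 1 where b = |aᴴ a₁|².  Here log(R̄) is represented by
a Hermitian matrix `L` with exp L = R̄. -/
theorem stmt_5 {M : ℕ} (a₁ a : Fin M → ℂ)
    (ha₁ : star a₁ ⬝ᵥ a₁ = 1) (ha : star a ⬝ᵥ a = 1)
    (s₁ : ℝ) (hs₁ : 0 < s₁)
    (L : Matrix (Fin M) (Fin M) ℂ) (hL : L.IsHermitian)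
    (hexp : NormedSpace.exp L = (s₁ : ℂ) • Matrix.vecMulVec a₁ (star a₁) + 1)
    (b : ℝ) (hb : b = Complex.normSq (star a ⬝ᵥ a₁)) :
    Real.exp ((star a ⬝ᵥ L *ᵥ a).re) - 1 = (s₁ + 1) ^ b - 1 := by
  set c := Real.log (s₁ + 1) with hc
  have hLP : L = (c : ℂ) • vecMulVec a₁ (star a₁) :=
    herm_log_unique_s5 s₁ hs₁ _ L (vecMulVec_mul_self' a₁ ha₁) hL hexp
  set z := star a ⬝ᵥ a₁ with hz
  have hconj : star a₁ ⬝ᵥ a = starRingEnd ℂ z := by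
    simp only [hz, dotProduct, map_sum, _root_.map_mul, Pi.star_apply, RingHomCompTriple.comp_apply,
      RingHom.id_apply]
    exact Finset.sum_congr rfl fun k _ => by
      simp [mul_comm, Complex.star_def]
  have hform : star a ⬝ᵥ L *ᵥ a = ((c * b : ℝ) : ℂ) := by
    rw [hLP, Matrix.smul_mulVec, vecMulVec_mulVec', dotProduct_smul, dotProduct_smul,
      hconj]
    push_cast
    rw [hb]
    rw [smul_eq_mul, smul_eq_mul, ← hz]
    rw [← Complex.normSq_eq_conj_mul_self]
  rw [hform, Complex.ofReal_re, Real.rpow_def_of_pos (by linarith : (0:ℝ) < s₁ + 1), ← hc,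
    mul_comm]
end

section
/- The minimizer over σ² > 0 of the Kullback-Leibler divergence d(R̂, R) = tr(R⁻¹R̂ − I) − log det(R⁻¹R̂), with R = σ² a aᴴ + I and a a unit vector, is σ² = aᴴ R̂ a − 1, provided aᴴ R̂ a > 1. -/
open Matrix Complex ComplexOrder

lemma aux_scalar_12 {q t : ℝ} (hq : 1 < q) (ht : 0 < t) :
    Real.log (q - 1 + 1) - q * ((q - 1) / (q - 1 + 1)) ≤
      Real.log (t + 1) - q * (t / (t + 1)) := by
  have hq0 : (0:ℝ) < q := by linarith
  have hu : (0:ℝ) < t + 1 := by linarith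
  have h := Real.log_le_sub_one_of_pos (show (0:ℝ) < q / (t + 1) by positivity)
  rw [Real.log_div (ne_of_gt hq0) (ne_of_gt hu)] at h
  have e1 : q - 1 + 1 = q := by ring
  rw [e1]
  have e2 : q * ((q - 1) / q) = q - 1 := by field_simp
  have e3 : q * (t / (t + 1)) = q - q / (t + 1) := by field_simp; ring
  rw [e2, e3]
  linarith

/-- The minimizer over σ² > 0 of the Kullback-Leibler divergence
d(R̂, R) = tr(R⁻¹R̂ − I) − log det(R⁻¹R̂), with R = σ² a aᴴ + I and `a` a unit vector,
is σ² = aᴴ R̂ a − 1, provided aᴴ R̂ a > 1. -/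
theorem stmt_12 {M : ℕ} (Rh : Matrix (Fin M) (Fin M) ℂ) (hRh : Rh.PosDef)
    (a : Fin M → ℂ) (ha : star a ⬝ᵥ a = 1)
    (hgt : 1 < (star a ⬝ᵥ Rh *ᵥ a).re)
    (R : ℝ → Matrix (Fin M) (Fin M) ℂ)
    (hR : ∀ s : ℝ, R s = (s : ℂ) • Matrix.vecMulVec a (star a) + 1)
    (f : ℝ → ℝ)
    (hf : ∀ s : ℝ, f s = (Matrix.trace ((R s)⁻¹ * Rh - 1)).re -
      Real.log ((Matrix.det ((R s)⁻¹ * Rh)).re)) :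
    ∀ t : ℝ, 0 < t → f ((star a ⬝ᵥ Rh *ᵥ a).re - 1) ≤ f t := by
  set P : Matrix (Fin M) (Fin M) ℂ := Matrix.vecMulVec a (star a) with hPdef
  set q : ℝ := (star a ⬝ᵥ Rh *ᵥ a).re with hqdef
  -- P is idempotent
  have hP2 : P * P = P := by
    ext i k
    simp only [hPdef, Matrix.mul_apply, Matrix.vecMulVec_apply]
    have h1 : ∀ j, a i * (star a) j * (a j * (star a) k)
        = a i * (star a) k * ((star a) j * a j) := fun j => by ring
    simp_rw [h1, ← Finset.mul_sum]
    rw [show (∑ j, (star a) j * a j) = star a ⬝ᵥ a from rfl, ha, mul_one]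
  -- inverse of R s
  have hinv : ∀ s : ℝ, 0 < s → (R s)⁻¹ = 1 - ((s / (s + 1) : ℝ) : ℂ) • P := by
    intro s hs
    have hs1 : (0:ℝ) < s + 1 := by linarith
    apply Matrix.inv_eq_right_inv
    rw [hR s]
    have key : ((s:ℂ) • P + 1) * (1 - ((s / (s + 1) : ℝ) : ℂ) • P)
        = 1 + ((s:ℂ) - (s:ℂ) * ((s / (s + 1) : ℝ) : ℂ) - ((s / (s + 1) : ℝ) : ℂ)) • P := by
      simp only [mul_sub, add_mul, mul_one, one_mul, smul_mul_assoc, mul_smul_comm,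
        smul_smul, hP2, sub_smul]
      module
    rw [key]
    have hz : (s:ℂ) - (s:ℂ) * ((s / (s + 1) : ℝ) : ℂ) - ((s / (s + 1) : ℝ) : ℂ) = 0 := by
      have : (s - s * (s / (s + 1)) - s / (s + 1) : ℝ) = 0 := by field_simp; ring
      calc (s:ℂ) - (s:ℂ) * ((s / (s + 1) : ℝ) : ℂ) - ((s / (s + 1) : ℝ) : ℂ)
          = ((s - s * (s / (s + 1)) - s / (s + 1) : ℝ) : ℂ) := by push_cast; ring
        _ = 0 := by rw [this, Complex.ofReal_zero]
    rw [hz, zero_smul, add_zero]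
  -- trace of P * Rh
  have htr : Matrix.trace (P * Rh) = star a ⬝ᵥ Rh *ᵥ a := by
    rw [hPdef, Matrix.vecMulVec_eq Unit, Matrix.mul_assoc, ← Matrix.replicateRow_vecMul,
      Matrix.trace_replicateCol_mul_replicateRow, Matrix.dotProduct_mulVec, dotProduct_comm]
  -- determinant of R s
  have hdet : ∀ s : ℝ, Matrix.det (R s) = (s:ℂ) + 1 := by
    intro s
    rw [hR s, hPdef, Matrix.vecMulVec_eq Unit, ← Matrix.smul_mul, ← Matrix.replicateCol_smul,
      add_comm, Matrix.det_one_add_replicateCol_mul_replicateRow, dotProduct_smul, ha]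
    simp [add_comm]
  -- det Rh is a positive real
  have hdpos : (0:ℂ) < Rh.det := hRh.det_pos
  have hdre : 0 < (Rh.det).re := (Complex.lt_def.mp hdpos).1
  have hdim : (Rh.det).im = 0 := ((Complex.lt_def.mp hdpos).2).symm
  set C : ℝ := (Matrix.trace Rh).re - M - Real.log ((Rh.det).re) with hCdef
  have hfs : ∀ s : ℝ, 0 < s → f s = C + (Real.log (s + 1) - q * (s / (s + 1))) := by
    intro s hs
    have hs1 : (0:ℝ) < s + 1 := by linarith
    set c : ℝ := s / (s + 1) with hc
    rw [hf s, hinv s hs]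
    have hmul : (1 - (c:ℂ) • P) * Rh = Rh - (c:ℂ) • (P * Rh) := by
      rw [sub_mul, one_mul, Matrix.smul_mul]
    have htr2 : (Matrix.trace ((1 - (c:ℂ) • P) * Rh - 1)).re
        = (Matrix.trace Rh).re - c * q - M := by
      rw [hmul, Matrix.trace_sub, Matrix.trace_sub, Matrix.trace_smul, htr, Matrix.trace_one]
      simp [Complex.sub_re, smul_eq_mul, Complex.re_ofReal_mul, hqdef]
    have hdinv : Matrix.det (1 - (c:ℂ) • P) = ((s:ℂ) + 1)⁻¹ := by
      rw [← hinv s hs, Matrix.det_nonsing_inv, hdet s, Ring.inverse_eq_inv']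
    have hdet2 : (Matrix.det ((1 - (c:ℂ) • P) * Rh)).re = (s + 1)⁻¹ * (Rh.det).re := by
      rw [Matrix.det_mul, hdinv]
      have : ((s:ℂ) + 1)⁻¹ = (((s + 1)⁻¹ : ℝ) : ℂ) := by push_cast; ring
      rw [this, Complex.re_ofReal_mul]
    rw [htr2, hdet2, Real.log_mul (by positivity) (ne_of_gt hdre), Real.log_inv]
    rw [hCdef]
    ring
  intro t ht
  have hq1 : (0:ℝ) < q - 1 := by simp only [hqdef]; linarith
  rw [show (star a ⬝ᵥ Rh *ᵥ a).re - 1 = q - 1 from rfl]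
  rw [hfs (q - 1) hq1, hfs t ht]
  have := aux_scalar_12 (q := q) (t := t) (by simpa [hqdef] using hgt) ht
  linarith
end

section
/- The minimizer over σ² > 0 of the reversed Kullback-Leibler divergence d(R, R̂) = tr(R̂⁻¹R − I) − log det(R̂⁻¹R), with R = σ² a aᴴ + I and a a unit vector, is σ² = 1/(aᴴ R̂⁻¹ a) − 1, provided 0 < aᴴ R̂⁻¹ a < 1. -/
/-!
With `P = R̂⁻¹`, the trace term of the divergence is affine in `σ²` with slope `aᴴ P a = q`, and
by the matrix determinant lemma `det (P R) = det P · (1 + σ²)`. Up to a constant the divergence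
is therefore `σ² q − log (1 + σ²)`, and `log x ≤ x − 1` at `x = q (1 + σ²)` shows that this is
smallest where `q (1 + σ²) = 1`.
-/

open Matrix Complex ComplexOrder

namespace Matrix

variable {n R : Type*} [Fintype n]

theorem trace_mul_vecMulVec [CommSemiring R] (A : Matrix n n R) (u v : n → R) :
    trace (A * vecMulVec u v) = v ⬝ᵥ A *ᵥ u := by
  rw [mul_vecMulVec, trace_vecMulVec, dotProduct_comm]

theorem det_one_add_vecMulVec [DecidableEq n] [CommRing R] (u v : n → R) :
    det (1 + vecMulVec u v) = 1 + v ⬝ᵥ u := by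
  rw [vecMulVec_eq Unit, det_one_add_replicateCol_mul_replicateRow]

variable [DecidableEq n]

theorem det_smul_vecMulVec_star_add_one {a : n → ℂ} (ha : star a ⬝ᵥ a = 1) (s : ℂ) :
    det (s • vecMulVec a (star a) + 1) = 1 + s := by
  rw [← smul_vecMulVec, add_comm, det_one_add_vecMulVec, dotProduct_smul, ha, smul_eq_mul,
    mul_one]

/-- The divergence `d(R, R̂)` of the paper, written in terms of `P = R̂⁻¹`. -/
noncomputable def logDetDivergence (P R : Matrix n n ℂ) : ℝ :=
  (trace (P * R - 1)).re - Real.log (det (P * R)).re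

theorem logDetDivergence_smul_vecMulVec_star_add_one {P : Matrix n n ℂ} (hP : P.PosDef)
    {a : n → ℂ} (ha : star a ⬝ᵥ a = 1) {s : ℝ} (hs : -1 < s) :
    logDetDivergence P ((s : ℂ) • vecMulVec a (star a) + 1) =
      s * (star a ⬝ᵥ P *ᵥ a).re - Real.log (1 + s) + logDetDivergence P 1 := by
  obtain ⟨hdet_re, hdet_im⟩ := Complex.pos_iff.mp hP.det_pos
  have htrace : (trace (P * ((s : ℂ) • vecMulVec a (star a) + 1) - 1)).re =
      s * (star a ⬝ᵥ P *ᵥ a).re + (trace (P * 1 - 1)).re := by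
    rw [mul_add, Matrix.mul_smul, add_sub_assoc, trace_add, trace_smul, trace_mul_vecMulVec]
    simp
  have hdet : (det (P * ((s : ℂ) • vecMulVec a (star a) + 1))).re =
      (det (P * 1)).re * (1 + s) := by
    rw [det_mul, det_smul_vecMulVec_star_add_one ha, mul_one]
    simp [← hdet_im]
  rw [logDetDivergence, logDetDivergence, htrace, hdet,
    Real.log_mul (by simpa using hdet_re.ne') (by linarith)]
  ring

end Matrix

theorem Real.isMinOn_mul_sub_log_one_add {q : ℝ} (hq : 0 < q) :
    IsMinOn (fun s => s * q - Real.log (1 + s)) (Set.Ioi (-1)) (1 / q - 1) := by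
  refine isMinOn_iff.mpr fun t (ht : -1 < t) => ?_
  have hlog := Real.log_le_sub_one_of_pos (show 0 < q * (1 + t) by nlinarith)
  rw [Real.log_mul hq.ne' (by linarith)] at hlog
  simp only [add_sub_cancel, one_div, Real.log_inv, sub_mul, inv_mul_cancel₀ hq.ne']
  linarith

theorem stmt_13_general {M : ℕ} (Rh : Matrix (Fin M) (Fin M) ℂ) (hRh : Rh.PosDef)
    (a : Fin M → ℂ) (ha : star a ⬝ᵥ a = 1)
    (q : ℝ) (hq : q = (star a ⬝ᵥ Rh⁻¹ *ᵥ a).re) (hq0 : 0 < q)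
    (R : ℝ → Matrix (Fin M) (Fin M) ℂ)
    (hR : ∀ s : ℝ, R s = (s : ℂ) • Matrix.vecMulVec a (star a) + 1)
    (f : ℝ → ℝ)
    (hf : ∀ s : ℝ, f s = (Matrix.trace (Rh⁻¹ * R s - 1)).re -
      Real.log ((Matrix.det (Rh⁻¹ * R s)).re)) :
    ∀ t : ℝ, 0 < t → f (1 / q - 1) ≤ f t := by
  have hf_eq (s : ℝ) (hs : -1 < s) :
      f s = s * q - Real.log (1 + s) + logDetDivergence Rh⁻¹ 1 := by
    rw [hf, hR, hq, ← logDetDivergence_smul_vecMulVec_star_add_one hRh.inv ha hs,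
      logDetDivergence]
  have hmin : -1 < 1 / q - 1 := by linarith [one_div_pos.mpr hq0]
  intro t ht
  rw [hf_eq _ hmin, hf_eq t (by linarith)]
  exact add_le_add_left (isMinOn_iff.mp (Real.isMinOn_mul_sub_log_one_add hq0) t
    (Set.mem_Ioi.mpr (by linarith))) _

/-- The minimizer over σ² > 0 of the reversed Kullback-Leibler divergence
d(R, R̂) = tr(R̂⁻¹R − I) − log det(R̂⁻¹R), with R = σ² a aᴴ + I and `a` a unit vector,
is σ² = 1/(aᴴ R̂⁻¹ a) − 1, provided 0 < aᴴ R̂⁻¹ a < 1. -/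
theorem stmt_13 {M : ℕ} (Rh : Matrix (Fin M) (Fin M) ℂ) (hRh : Rh.PosDef)
    (a : Fin M → ℂ) (ha : star a ⬝ᵥ a = 1)
    (q : ℝ) (hq : q = (star a ⬝ᵥ Rh⁻¹ *ᵥ a).re) (hq0 : 0 < q) (hq1 : q < 1)
    (R : ℝ → Matrix (Fin M) (Fin M) ℂ)
    (hR : ∀ s : ℝ, R s = (s : ℂ) • Matrix.vecMulVec a (star a) + 1)
    (f : ℝ → ℝ)
    (hf : ∀ s : ℝ, f s = (Matrix.trace (Rh⁻¹ * R s - 1)).re -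
      Real.log ((Matrix.det (Rh⁻¹ * R s)).re)) :
    ∀ t : ℝ, 0 < t → f (1 / q - 1) ≤ f t :=
  stmt_13_general Rh hRh a ha q hq hq0 R hR f hf
end

section
/- The critical-point equation for minimizing the Log-Determinant distance between R̂ and R = σ² a aᴴ + I over σ² yields σ² = 1/(aᴴ(R̂+I)⁻¹a) − 2; concretely, if σ² satisfies aᴴ(R̂+σ² a aᴴ+I)⁻¹ a = 1/(2(σ²+1)) with a a unit vector, then σ² = 1/(aᴴ(R̂+I)⁻¹a) − 2. -/
open Matrix Complex ComplexOrder

lemma vecMulVec_mulVec'_s16 {M : ℕ} (w v u : Fin M → ℂ) :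
    Matrix.vecMulVec w v *ᵥ u = (v ⬝ᵥ u) • w := by
  ext i
  simp [Matrix.mulVec, Matrix.vecMulVec_apply, dotProduct, Finset.mul_sum, mul_comm, mul_assoc,
    mul_left_comm]

/-- The critical-point equation for minimizing the Log-Determinant distance between R̂
and R = σ² a aᴴ + I over σ²: if σ² satisfies aᴴ(R̂ + σ² a aᴴ + I)⁻¹ a = 1/(2(σ²+1))
with `a` a unit vector, then σ² = 1/(aᴴ(R̂+I)⁻¹a) − 2. -/
theorem stmt_16 {M : ℕ} (Rh : Matrix (Fin M) (Fin M) ℂ) (hRh : Rh.PosDef)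
    (a : Fin M → ℂ) (ha : star a ⬝ᵥ a = 1)
    (s : ℝ) (hs : -1 < s)
    (hcrit : star a ⬝ᵥ (Rh + (s : ℂ) • Matrix.vecMulVec a (star a) + 1)⁻¹ *ᵥ a =
      ((1 / (2 * (s + 1)) : ℝ) : ℂ)) :
    s = 1 / (star a ⬝ᵥ (Rh + 1)⁻¹ *ᵥ a).re - 2 := by
  have hs1 : s + 1 ≠ 0 := by linarith
  have hs2 : s + 2 ≠ 0 := by linarith
  set B : Matrix (Fin M) (Fin M) ℂ := Rh + (s : ℂ) • Matrix.vecMulVec a (star a) + 1 with hBdef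
  set c : ℂ := ((1 / (2 * (s + 1)) : ℝ) : ℂ) with hcdef
  have hcne : c ≠ 0 := by
    simp only [hcdef, ne_eq, Complex.ofReal_eq_zero]
    positivity
  -- B must be invertible
  have hdet : IsUnit B.det := by
    by_contra h
    rw [Matrix.nonsing_inv_apply_not_isUnit B h] at hcrit
    simp only [Matrix.zero_mulVec, dotProduct_zero] at hcrit
    exact hcne hcrit.symm
  set u : Fin M → ℂ := B⁻¹ *ᵥ a with hudef
  have hBu : B *ᵥ u = a := by
    rw [hudef, Matrix.mulVec_mulVec, Matrix.mul_nonsing_inv B hdet, Matrix.one_mulVec]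
  have hau : star a ⬝ᵥ u = c := hcrit
  -- (Rh + 1) *ᵥ u = (1 - s*c) • a
  have hA : (Rh + 1).PosDef := hRh.add Matrix.PosDef.one
  have hAdet : IsUnit (Rh + 1).det := (Matrix.isUnit_iff_isUnit_det _).mp hA.isUnit
  have hAu : (Rh + 1) *ᵥ u = (1 - (s : ℂ) * c) • a := by
    have h0 : Rh *ᵥ u + ((s : ℂ) * c) • a + u = a := by
      have := hBu
      rw [hBdef, Matrix.add_mulVec, Matrix.add_mulVec, Matrix.one_mulVec,
        Matrix.smul_mulVec, vecMulVec_mulVec'_s16, hau] at this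
      rw [smul_smul] at this
      convert this using 2
    rw [add_right_comm] at h0
    rw [Matrix.add_mulVec, Matrix.one_mulVec, sub_smul, one_smul, eq_sub_iff_add_eq]
    exact h0
  have hu : u = (1 - (s : ℂ) * c) • ((Rh + 1)⁻¹ *ᵥ a) := by
    have h1 : (Rh + 1)⁻¹ *ᵥ ((Rh + 1) *ᵥ u) = u := by
      rw [Matrix.mulVec_mulVec, Matrix.nonsing_inv_mul _ hAdet, Matrix.one_mulVec]
    rw [← h1, hAu, Matrix.mulVec_smul]
  set q : ℂ := star a ⬝ᵥ (Rh + 1)⁻¹ *ᵥ a with hqdef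
  have key : (1 - (s : ℂ) * c) * q = c := by
    conv_rhs => rw [← hau, hu]
    rw [dotProduct_smul, smul_eq_mul, hqdef]
  have hfacR : (1 : ℝ) - s * (1 / (2 * (s + 1))) = (s + 2) / (2 * (s + 1)) := by
    field_simp
    ring
  have hfac : (1 : ℂ) - (s : ℂ) * c = (((s + 2) / (2 * (s + 1)) : ℝ) : ℂ) := by
    rw [hcdef, ← hfacR]
    push_cast
    ring
  have hfacne : ((s + 2) / (2 * (s + 1)) : ℝ) ≠ 0 := by
    apply div_ne_zero hs2
    intro h; apply hs1; linarith
  have hne : ((((s + 2) / (2 * (s + 1)) : ℝ)) : ℂ) ≠ 0 := Complex.ofReal_ne_zero.mpr hfacne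
  have h2 : ((s + 2) / (2 * (s + 1)) : ℝ) * (1 / (s + 2)) = 1 / (2 * (s + 1)) := by
    field_simp
  have hq : q = ((1 / (s + 2) : ℝ) : ℂ) := by
    apply mul_left_cancel₀ hne
    rw [hfac] at key
    rw [key, ← Complex.ofReal_mul, h2, hcdef]
  rw [hqdef] at *
  rw [hq, Complex.ofReal_re, one_div_one_div]
  ring
end
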